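/- For all L ≥ 1, z ∈ [0,1] and p ∈ ℝ^d one has 0 ≤ a_1^{(L)}(p; z) ≤ a_1(2p/(2+√d); 1), and the function p ↦ a_1(2p/(2+√d); 1) belongs to L¹(ℝ^d). -/
import Mathlib


open MeasureTheory

noncomputable section

/-- `a_ν(p;z)` with `ν = 1`: `a₁(p;z) = z e^{-β|p|²} / (1 - z e^{-β|p|²})`. -/
def a1 (d : ℕ) (β : ℝ) (z : ℝ) (p : EuclideanSpace ℝ (Fin d)) : ℝ :=
  z * Real.exp (-β * ‖p‖ ^ 2) / (1 - z * Real.exp (-β * ‖p‖ ^ 2))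

/-- the lattice point `k ∈ ℤ^d` such that `p ∈ (2π/L)(k + (-1/2,1/2]^d)`. -/
def latticePt (d : ℕ) (L : ℝ) (p : EuclideanSpace ℝ (Fin d)) : Fin d → ℤ :=
  fun i => ⌈L * p i / (2 * Real.pi) + 1 / 2⌉ - 1

/-- the lattice vector `2πk/L ∈ ℝ^d`. -/
def latVec (d : ℕ) (L : ℝ) (k : Fin d → ℤ) : EuclideanSpace ℝ (Fin d) :=
  (EuclideanSpace.equiv (Fin d) ℝ).symm fun i => 2 * Real.pi * (k i : ℝ) / L

/-- the step function `a₁^{(L)}(p;z)`: `0` on the box around `0`, and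
`a₁(2πk/L;z)` on the box `(2π/L)(k + (-1/2,1/2]^d)` for `k ≠ 0`. -/
def a1L (d : ℕ) (β L z : ℝ) (p : EuclideanSpace ℝ (Fin d)) : ℝ :=
  if latticePt d L p = 0 then 0 else a1 d β z (latVec d L (latticePt d L p))

lemma frac_nonneg {v : ℝ} (h0 : 0 ≤ v) (h1 : v ≤ 1) : 0 ≤ v / (1 - v) := by
  rcases eq_or_lt_of_le h1 with h | h
  · simp [h]
  · exact div_nonneg h0 (by linarith)

lemma frac_mono {u v : ℝ} (h0 : 0 ≤ u) (huv : u ≤ v) (h1 : v < 1) :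
    u / (1 - u) ≤ v / (1 - v) :=
  div_le_div₀ (h0.trans huv) huv (by linarith) (by linarith)

lemma coord_le_norm {d : ℕ} (x : EuclideanSpace ℝ (Fin d)) (i : Fin d) : |x i| ≤ ‖x‖ := by
  rw [EuclideanSpace.norm_eq, show |x i| = Real.sqrt (|x i| ^ 2) by
    rw [Real.sqrt_sq (abs_nonneg _)]]
  apply Real.sqrt_le_sqrt
  have := Finset.single_le_sum (f := fun j => ‖x j‖ ^ 2) (fun j _ => by positivity)
    (Finset.mem_univ i)
  simpa [Real.norm_eq_abs] using this

lemma a1_nonneg (d : ℕ) {β z : ℝ} (hβ : 0 < β) (hz0 : 0 ≤ z) (hz1 : z ≤ 1)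
    (p : EuclideanSpace ℝ (Fin d)) : 0 ≤ a1 d β z p := by
  apply frac_nonneg (by positivity)
  have he : Real.exp (-β * ‖p‖ ^ 2) ≤ 1 := Real.exp_le_one_iff.mpr (by nlinarith [sq_nonneg ‖p‖])
  calc z * Real.exp (-β * ‖p‖ ^ 2) ≤ 1 * 1 :=
        mul_le_mul hz1 he (Real.exp_pos _).le zero_le_one
    _ = 1 := one_mul 1

lemma a1_le_a1 (d : ℕ) {β z : ℝ} (hβ : 0 < β) (hz0 : 0 ≤ z) (hz1 : z ≤ 1)
    {q r : EuclideanSpace ℝ (Fin d)} (hr : r ≠ 0) (hrq : ‖r‖ ≤ ‖q‖) :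
    a1 d β z q ≤ a1 d β 1 r := by
  unfold a1
  rw [one_mul]
  have hq2 : ‖r‖ ^ 2 ≤ ‖q‖ ^ 2 := by nlinarith [norm_nonneg r, norm_nonneg q]
  apply frac_mono (by positivity)
  · calc z * Real.exp (-β * ‖q‖ ^ 2) ≤ 1 * Real.exp (-β * ‖q‖ ^ 2) :=
          mul_le_mul_of_nonneg_right hz1 (Real.exp_pos _).le
      _ = Real.exp (-β * ‖q‖ ^ 2) := one_mul _
      _ ≤ Real.exp (-β * ‖r‖ ^ 2) := Real.exp_le_exp.mpr (by nlinarith)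
  · have hrpos : 0 < ‖r‖ := norm_pos_iff.mpr hr
    exact Real.exp_lt_one_iff.mpr (by nlinarith [mul_pos hβ (pow_pos hrpos 2)])

lemma key_bound {x : ℝ} (hx : 0 < x) :
    Real.exp (-x) / (1 - Real.exp (-x)) ≤ 2 / x * Real.exp (-x / 2) := by
  have hA := Real.add_one_le_exp (x / 2)
  have hApos := Real.exp_pos (x / 2)
  have hBpos := Real.exp_pos (-x / 2)
  have hB1 : Real.exp (-x / 2) ≤ 1 := Real.exp_le_one_iff.mpr (by linarith)
  have hBA : Real.exp (-x / 2) * Real.exp (x / 2) = 1 := by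
    rw [← Real.exp_add]; ring_nf; exact Real.exp_zero
  have hxx : Real.exp x = Real.exp (x / 2) * Real.exp (x / 2) := by
    rw [← Real.exp_add]; ring_nf
  have hE1 : 1 < Real.exp x := by nlinarith
  have heq : Real.exp (-x) / (1 - Real.exp (-x)) = 1 / (Real.exp x - 1) := by
    rw [Real.exp_neg]
    have h0 := Real.exp_pos x
    field_simp
  rw [heq, div_mul_eq_mul_div, div_le_div_iff₀ (by linarith) hx]
  have h3 : Real.exp (-x / 2) * (Real.exp (x / 2) * Real.exp (x / 2))
      = Real.exp (x / 2) := by rw [← mul_assoc, hBA, one_mul]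
  nlinarith [hA, hB1, hBpos, h3, hxx]

lemma integrable_abs_rpow_mul_exp_neg_mul_sq {b : ℝ} (hb : 0 < b) {s : ℝ} (hs : -1 < s) :
    Integrable fun x : ℝ => |x| ^ s * Real.exp (-b * x ^ 2) := by
  have base : IntegrableOn (fun x : ℝ => |x| ^ s * Real.exp (-b * x ^ 2)) (Set.Ioi 0) := by
    apply (integrableOn_rpow_mul_exp_neg_mul_sq hb hs).congr_fun ?_ measurableSet_Ioi
    intro x hx
    simp only [abs_of_pos (Set.mem_Ioi.mp hx)]
  rw [← integrableOn_univ, ← Set.Iio_union_Ici (a := (0 : ℝ)), integrableOn_union,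
    integrableOn_Ici_iff_integrableOn_Ioi]
  refine ⟨?_, base⟩
  rw [← (Measure.measurePreserving_neg (volume : Measure ℝ)).integrableOn_comp_preimage
      (Homeomorph.neg ℝ).measurableEmbedding]
  simp only [Function.comp_def, abs_neg, neg_sq, Set.neg_preimage, Set.neg_Iio, neg_neg, neg_zero]
  exact base

/-- Lemma 3 (first part): for `L ≥ 1` and `z ∈ [0,1]`,
`0 ≤ a₁^{(L)}(p;z) ≤ a₁(2p/(2+√d);1)`, and `p ↦ a₁(2p/(2+√d);1) ∈ L¹(ℝ^d)`. -/
theorem a1L_bound_and_integrable (d : ℕ) (hd : 2 < d) (β : ℝ) (hβ : 0 < β) :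
    (∀ L : ℝ, 1 ≤ L → ∀ z ∈ Set.Icc (0 : ℝ) 1, ∀ p : EuclideanSpace ℝ (Fin d),
      0 ≤ a1L d β L z p ∧
      a1L d β L z p ≤ a1 d β 1 ((2 / (2 + Real.sqrt d)) • p)) ∧
    Integrable (fun p : EuclideanSpace ℝ (Fin d) =>
      a1 d β 1 ((2 / (2 + Real.sqrt d)) • p)) := by
  have hd0 : 0 < d := by omega
  have hdR : (0 : ℝ) < d := by exact_mod_cast hd0
  have hdR' : (2 : ℝ) < d := by exact_mod_cast hd
  set s : ℝ := 2 / (2 + Real.sqrt d) with hs_def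
  have hsd : 0 ≤ Real.sqrt d := Real.sqrt_nonneg _
  have h2d : (0 : ℝ) < 2 + Real.sqrt d := by positivity
  have hs_pos : 0 < s := by positivity
  constructor
  ·
    intro L hL z hz p
    have hL0 : 0 < L := by linarith
    have hπ := Real.pi_pos
    have h2π : (0 : ℝ) < 2 * Real.pi := by linarith
    by_cases hk : latticePt d L p = 0
    · unfold a1L
      rw [if_pos hk]
      exact ⟨le_refl 0, a1_nonneg d hβ zero_le_one le_rfl _⟩
    · set k := latticePt d L p with hk_def
      set q := latVec d L k with hq_def
      have hbounds : ∀ j, (k j : ℝ) - 1 / 2 < L * p j / (2 * Real.pi) ∧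
          L * p j / (2 * Real.pi) ≤ (k j : ℝ) + 1 / 2 := by
        intro j
        have hkj : (k j : ℝ) = (⌈L * p j / (2 * Real.pi) + 1 / 2⌉ : ℤ) - 1 := by
          rw [hk_def]; simp [latticePt]
        constructor
        · have := Int.ceil_lt_add_one (L * p j / (2 * Real.pi) + 1 / 2)
          rw [hkj]; linarith
        · have := Int.le_ceil (L * p j / (2 * Real.pi) + 1 / 2)
          rw [hkj]; linarith
      have hqj : ∀ j, q j = 2 * Real.pi * (k j : ℝ) / L := fun j => rfl
      have hcoord : ∀ j, |p j - q j| ≤ Real.pi / L := by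
        intro j
        set a : ℝ := L * p j / (2 * Real.pi) with ha_def
        have hpj : p j = 2 * Real.pi * a / L := by
          rw [ha_def]; field_simp
        have hdiff : p j - q j = 2 * Real.pi * (a - (k j : ℝ)) / L := by
          rw [hqj j, hpj]; ring
        have hak : |a - (k j : ℝ)| ≤ 1 / 2 :=
          abs_le.mpr ⟨by linarith [(hbounds j).1], by linarith [(hbounds j).2]⟩
        rw [hdiff, abs_div, abs_of_pos hL0, abs_mul, abs_of_pos h2π]
        calc 2 * Real.pi * |a - (k j : ℝ)| / L ≤ 2 * Real.pi * (1 / 2) / L := by gcongr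
          _ = Real.pi / L := by ring
      obtain ⟨i, hki⟩ : ∃ i, k i ≠ 0 := Function.ne_iff.mp hk
      have hpi : p i ≠ 0 := by
        intro h0
        have h1 := (hbounds i).1
        have h2 := (hbounds i).2
        rw [h0] at h1 h2
        simp only [mul_zero, zero_div] at h1 h2
        have : (k i : ℝ) ≤ -1 ∨ 1 ≤ (k i : ℝ) := by
          have : k i ≤ -1 ∨ 1 ≤ k i := by omega
          rcases this with h | h
          · left; exact_mod_cast h
          · right; exact_mod_cast h
        rcases this with h | h <;> linarith
      have hp0 : p ≠ 0 := by
        intro h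
        exact hpi (by rw [h]; rfl)
      have hq_lb : 2 * Real.pi / L ≤ ‖q‖ := by
        have hki1 : (1 : ℝ) ≤ |(k i : ℝ)| := by
          have := Int.one_le_abs hki
          calc (1 : ℝ) ≤ (|k i| : ℤ) := by exact_mod_cast this
            _ = |(k i : ℝ)| := by push_cast; rfl
        have h1 : 2 * Real.pi / L ≤ |q i| := by
          rw [hqj i, abs_div, abs_of_pos hL0, abs_mul, abs_of_pos h2π]
          calc 2 * Real.pi / L = 2 * Real.pi * 1 / L := by ring
            _ ≤ 2 * Real.pi * |(k i : ℝ)| / L := by gcongr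
        exact h1.trans (coord_le_norm q i)
      have hpq : ‖p - q‖ ≤ Real.sqrt d * (Real.pi / L) := by
        rw [EuclideanSpace.norm_eq]
        have hterm : ∀ j, ‖(p - q) j‖ ^ 2 ≤ (Real.pi / L) ^ 2 := by
          intro j
          have : (p - q) j = p j - q j := rfl
          rw [this, Real.norm_eq_abs]
          have h := hcoord j
          nlinarith [abs_nonneg (p j - q j)]
        calc Real.sqrt (∑ j, ‖(p - q) j‖ ^ 2) ≤ Real.sqrt (∑ _j : Fin d, (Real.pi / L) ^ 2) :=
              Real.sqrt_le_sqrt (Finset.sum_le_sum fun j _ => hterm j)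
          _ = Real.sqrt ((d : ℝ) * (Real.pi / L) ^ 2) := by
              rw [Finset.sum_const, Finset.card_univ, Fintype.card_fin, nsmul_eq_mul]
          _ = Real.sqrt d * (Real.pi / L) := by
              rw [Real.sqrt_mul (Nat.cast_nonneg d), Real.sqrt_sq (by positivity)]
      have hπL : Real.pi / L ≤ ‖q‖ / 2 := by
        have h : 2 * Real.pi / L = 2 * (Real.pi / L) := by ring
        rw [h] at hq_lb; linarith
      have hp_norm : ‖p‖ ≤ (2 + Real.sqrt d) / 2 * ‖q‖ := by
        have h1 : ‖p‖ ≤ ‖p - q‖ + ‖q‖ := by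
          calc ‖p‖ = ‖p - q + q‖ := by rw [sub_add_cancel]
            _ ≤ ‖p - q‖ + ‖q‖ := norm_add_le _ _
        have h2 : ‖p - q‖ ≤ Real.sqrt d * (‖q‖ / 2) :=
          hpq.trans (mul_le_mul_of_nonneg_left hπL hsd)
        have h3 : (2 + Real.sqrt d) / 2 * ‖q‖ = ‖q‖ + Real.sqrt d * (‖q‖ / 2) := by ring
        linarith
      have hsp : ‖s • p‖ ≤ ‖q‖ := by
        rw [norm_smul, Real.norm_eq_abs, abs_of_pos hs_pos]
        have hmul : s * ((2 + Real.sqrt d) / 2) = 1 := by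
          rw [hs_def]; field_simp
        calc s * ‖p‖ ≤ s * ((2 + Real.sqrt d) / 2 * ‖q‖) := by gcongr
          _ = s * ((2 + Real.sqrt d) / 2) * ‖q‖ := by ring
          _ = ‖q‖ := by rw [hmul, one_mul]
      have hsp0 : s • p ≠ 0 := smul_ne_zero hs_pos.ne' hp0
      constructor
      · show 0 ≤ a1L d β L z p
        unfold a1L
        rw [← hk_def, if_neg hk]
        exact a1_nonneg d hβ hz.1 hz.2 _
      · show a1L d β L z p ≤ a1 d β 1 (s • p)
        unfold a1L
        rw [← hk_def, if_neg hk, ← hq_def]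
        exact a1_le_a1 d hβ hz.1 hz.2 hsp0 hsp
  ·
    set c : ℝ := β * s ^ 2 with hc_def
    have hc : 0 < c := by positivity
    have hexp_lt : (-1 : ℝ) < -2 / (d : ℝ) := by
      have h : 2 / (d : ℝ) < 1 := (div_lt_one hdR).mpr hdR'
      have h2 : (-2 : ℝ) / (d : ℝ) = -(2 / (d : ℝ)) := by ring
      linarith [h2 ▸ le_refl ((-2 : ℝ) / (d : ℝ))]
    -- 1-dim integrable factor
    have hg : Integrable (fun x : ℝ => |x| ^ (-2 / (d : ℝ)) * Real.exp (-(c / 2) * x ^ 2)) :=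
      integrable_abs_rpow_mul_exp_neg_mul_sq (by positivity) hexp_lt
    -- product is integrable on EuclideanSpace
    have hG : Integrable (fun p : EuclideanSpace ℝ (Fin d) =>
        ∏ i, (|p i| ^ (-2 / (d : ℝ)) * Real.exp (-(c / 2) * (p i) ^ 2))) := by
      have hmp := (EuclideanSpace.volume_preserving_symm_measurableEquiv_toLp (Fin d)).symm
      rw [← hmp.integrable_comp_emb (MeasurableEquiv.measurableEmbedding _)]
      exact Integrable.fintype_prod
        (f := fun (_ : Fin d) (x : ℝ) => |x| ^ (-2 / (d : ℝ)) * Real.exp (-(c / 2) * x ^ 2))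
        (fun _ => hg)
    have hGint : Integrable (fun p : EuclideanSpace ℝ (Fin d) =>
        (2 / (c * d)) * ∏ i, (|p i| ^ (-2 / (d : ℝ)) * Real.exp (-(c / 2) * (p i) ^ 2))) :=
      hG.const_mul _
    -- measurability
    have hmeas : AEStronglyMeasurable
        (fun p : EuclideanSpace ℝ (Fin d) => a1 d β 1 (s • p)) volume := by
      apply Measurable.aestronglyMeasurable
      unfold a1
      have hcont : Continuous fun p : EuclideanSpace ℝ (Fin d) =>
          (1 : ℝ) * Real.exp (-β * ‖s • p‖ ^ 2) := by fun_prop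
      exact hcont.measurable.div ((continuous_const.sub hcont).measurable)
    -- a.e. all coordinates nonzero
    have hae : ∀ᵐ p : EuclideanSpace ℝ (Fin d) ∂volume, ∀ i, p i ≠ 0 := by
      rw [ae_all_iff]
      intro i
      have h0 : (volume : Measure (EuclideanSpace ℝ (Fin d))) {p | p i = 0} = 0 := by
        have hset : {p : EuclideanSpace ℝ (Fin d) | p i = 0} =
            ↑(LinearMap.ker ((EuclideanSpace.proj i : EuclideanSpace ℝ (Fin d) →L[ℝ] ℝ)
              : EuclideanSpace ℝ (Fin d) →ₗ[ℝ] ℝ)) := by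
          ext p
          simp [LinearMap.mem_ker]
        rw [hset]
        apply Measure.addHaar_submodule
        intro htop
        have h1 : EuclideanSpace.single i (1 : ℝ) ∈
            LinearMap.ker ((EuclideanSpace.proj i : EuclideanSpace ℝ (Fin d) →L[ℝ] ℝ)
              : EuclideanSpace ℝ (Fin d) →ₗ[ℝ] ℝ) := htop ▸ Submodule.mem_top
        rw [LinearMap.mem_ker] at h1
        simp [EuclideanSpace.single_apply] at h1
      rw [ae_iff]
      simpa using h0
    -- conclude
    apply Integrable.mono' hGint hmeas
    filter_upwards [hae] with p hp
    have ht0 : 0 < ‖p‖ ^ 2 := by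
      have hp0 : p ≠ 0 := by
        intro h
        exact hp ⟨0, hd0⟩ (by simp [h])
      have := norm_pos_iff.mpr hp0
      positivity
    set t := ‖p‖ ^ 2 with ht_def
    have hsum : t = ∑ i, (p i) ^ 2 := by
      rw [ht_def, EuclideanSpace.norm_eq, Real.sq_sqrt (by positivity)]
      simp [Real.norm_eq_abs, sq_abs]
    have hfp : a1 d β 1 (s • p) = Real.exp (-(c * t)) / (1 - Real.exp (-(c * t))) := by
      unfold a1
      rw [one_mul]
      have hn : ‖s • p‖ ^ 2 = s ^ 2 * t := by
        rw [norm_smul, mul_pow, Real.norm_eq_abs, sq_abs]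
      rw [hn, show -β * (s ^ 2 * t) = -(c * t) by rw [hc_def]; ring]
    rw [hfp]
    have hxpos : 0 < c * t := by positivity
    have hnn : 0 ≤ Real.exp (-(c * t)) / (1 - Real.exp (-(c * t))) :=
      frac_nonneg (Real.exp_pos _).le (Real.exp_le_one_iff.mpr (by linarith))
    rw [Real.norm_eq_abs, abs_of_nonneg hnn]
    have hB : Real.exp (-(c * t) / 2) = ∏ i, Real.exp (-(c / 2) * (p i) ^ 2) := by
      rw [← Real.exp_sum]
      congr 1
      rw [hsum, Finset.mul_sum, neg_div, Finset.sum_div, ← Finset.sum_neg_distrib]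
      exact Finset.sum_congr rfl fun i _ => by ring
    have hAM : ∏ i, ((p i) ^ 2 : ℝ) ^ ((d : ℝ)⁻¹) ≤ t / d := by
      have hw : ∑ _i : Fin d, (d : ℝ)⁻¹ = 1 := by
        rw [Finset.sum_const, Finset.card_univ, Fintype.card_fin, nsmul_eq_mul]
        field_simp
      have h := Real.geom_mean_le_arith_mean_weighted Finset.univ (fun _ => (d : ℝ)⁻¹)
        (fun i => (p i) ^ 2) (fun i _ => by positivity) hw (fun i _ => by positivity)
      calc ∏ i, ((p i) ^ 2 : ℝ) ^ ((d : ℝ)⁻¹) ≤ ∑ i, (d : ℝ)⁻¹ * (p i) ^ 2 := h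
        _ = t / d := by rw [← Finset.mul_sum, ← hsum]; ring
    have hprod_pos : 0 < ∏ i, ((p i) ^ 2 : ℝ) ^ ((d : ℝ)⁻¹) :=
      Finset.prod_pos fun i _ =>
        Real.rpow_pos_of_pos (by nlinarith [abs_pos.mpr (hp i), sq_abs (p i)]) _
    have hA : ∏ i, |p i| ^ (-2 / (d : ℝ)) = (∏ i, ((p i) ^ 2 : ℝ) ^ ((d : ℝ)⁻¹))⁻¹ := by
      rw [← Finset.prod_inv_distrib]
      apply Finset.prod_congr rfl
      intro i _
      have h1 : ((p i) ^ 2 : ℝ) ^ ((d : ℝ)⁻¹) = |p i| ^ (2 / (d : ℝ)) := by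
        rw [← sq_abs, ← Real.rpow_natCast |p i| 2, ← Real.rpow_mul (abs_nonneg _)]
        rw [div_eq_mul_inv]
        norm_num
      rw [h1, ← Real.rpow_neg (abs_nonneg _)]
      rw [show -(2 / (d : ℝ)) = -2 / (d : ℝ) from by ring]
    have h2x : 2 / (c * t) ≤ (2 / (c * d)) * ∏ i, |p i| ^ (-2 / (d : ℝ)) := by
      rw [hA]
      have htd : (0 : ℝ) < t / d := by positivity
      have hinv : (t / (d : ℝ))⁻¹ ≤ (∏ i, ((p i) ^ 2 : ℝ) ^ ((d : ℝ)⁻¹))⁻¹ := by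
        gcongr
      calc 2 / (c * t) = (2 / (c * d)) * (t / (d : ℝ))⁻¹ := by
            rw [inv_div]
            field_simp
        _ ≤ (2 / (c * d)) * (∏ i, ((p i) ^ 2 : ℝ) ^ ((d : ℝ)⁻¹))⁻¹ := by
            apply mul_le_mul_of_nonneg_left hinv (by positivity)
    calc Real.exp (-(c * t)) / (1 - Real.exp (-(c * t)))
        ≤ 2 / (c * t) * Real.exp (-(c * t) / 2) := key_bound hxpos
      _ ≤ ((2 / (c * d)) * ∏ i, |p i| ^ (-2 / (d : ℝ))) * Real.exp (-(c * t) / 2) :=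
          mul_le_mul_of_nonneg_right h2x (Real.exp_pos _).le
      _ = (2 / (c * d)) * ∏ i, (|p i| ^ (-2 / (d : ℝ)) * Real.exp (-(c / 2) * (p i) ^ 2)) := by
          rw [hB, Finset.prod_mul_distrib]
          ring
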